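/- Let G be a finite group with |G| ≥ 2, and let S be a finite set of irreducible complex characters of G each of which is absolutely idempotent (i.e., |χ(x)| ∈ {0, d_χ} for all x). Then the intersection ⋂_{χ∈S} Z(χ) of their centres contains a non-identity element, where Z(χ) = {x ∈ G : |χ(x)| = d_χ}. -/

import Mathlib

/-!
Let `N` be a minimal normal subgroup of `G`. For each `χ`, the elements acting by scalars form a
normal subgroup `Z(χ)`, so `N ⊓ Z(χ)` is `N` or trivial. In the second case absolute idempotency
makes `χ` vanish on `N \ {1}`; then `S = ∑_{y ∈ N} ρ y` commutes with `G`, so it is a scalar by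
Schur's lemma, and comparing `trace S = χ 1` with `S * S = |N| • S` gives `|N| = 1`. Hence
`N ≤ Z(χ)` for every `χ`, and any `a ≠ 1` in `N` works.

That `|χ x| = χ 1` forces `ρ x` to be a scalar is the equality case of the triangle inequality
for the eigenvalues of `ρ x`, which are roots of unity: they all coincide, and `ρ x` is
semisimple.
-/

open CategoryTheory Module Polynomial

theorem eq_of_norm_sum_eq_card {ι E : Type*} [Fintype ι] [NormedAddCommGroup E]
    [InnerProductSpace ℝ E] {f : ι → E} (hf : ∀ i, ‖f i‖ = 1)
    (hsum : ‖∑ i, f i‖ = Fintype.card ι) (i j : ι) : f i = f j := by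
  have key : ∑ i, ∑ j, ‖f i - f j‖ ^ 2 = 0 :=
    calc ∑ i, ∑ j, ‖f i - f j‖ ^ 2 = ∑ i, ∑ j, (2 - 2 * inner ℝ (f i) (f j)) := by
          simp only [norm_sub_sq_real, hf]; ring_nf
      _ = 2 * (Fintype.card ι : ℝ) ^ 2 - 2 * inner ℝ (∑ i, f i) (∑ j, f j) := by
          rw [sum_inner]
          simp only [inner_sum, Finset.sum_sub_distrib, ← Finset.mul_sum, Finset.sum_const,
            Finset.card_univ, nsmul_eq_mul]
          ring
      _ = 0 := by rw [real_inner_self_eq_norm_sq, hsum]; ring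
  have hnonneg : ∀ i ∈ Finset.univ, 0 ≤ ∑ j, ‖f i - f j‖ ^ 2 := fun _ _ =>
    Finset.sum_nonneg fun _ _ => by positivity
  have hi := (Finset.sum_eq_zero_iff_of_nonneg hnonneg).1 key i (Finset.mem_univ _)
  have hij := (Finset.sum_eq_zero_iff_of_nonneg fun _ _ => by positivity).1 hi j
    (Finset.mem_univ _)
  simpa [sub_eq_zero] using hij

theorem Multiset.exists_eq_replicate_of_norm_sum_eq_card {E : Type*} [NormedAddCommGroup E]
    [InnerProductSpace ℝ E] {s : Multiset E} (hs : ∀ x ∈ s, ‖x‖ = 1)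
    (hsum : ‖s.sum‖ = Multiset.card s) : ∃ c, s = Multiset.replicate (Multiset.card s) c := by
  classical
  rcases Multiset.empty_or_exists_mem s with rfl | ⟨c, hc⟩
  · exact ⟨0, rfl⟩
  refine ⟨c, Multiset.eq_replicate_of_mem fun x hx => ?_⟩
  rw [Multiset.sum_eq_sum_coe, ← Multiset.card_coe] at hsum
  exact eq_of_norm_sum_eq_card (f := fun y : s => y.1) (fun y => hs _ (Multiset.coe_mem)) hsum
    ⟨x, ⟨0, Multiset.count_pos.2 hx⟩⟩ ⟨c, ⟨0, Multiset.count_pos.2 hc⟩⟩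

theorem Module.End.pow_eq_one_of_mem_roots_charpoly {K V : Type*} [Field K] [AddCommGroup V]
    [Module K V] [FiniteDimensional K V] {A : Module.End K V} {n : ℕ} (hA : A ^ n = 1) {μ : K}
    (hμ : μ ∈ A.charpoly.roots) : μ ^ n = 1 := by
  obtain ⟨v, hv⟩ :=
    ((hasEigenvalue_iff_isRoot_charpoly A μ).2 (isRoot_of_mem_roots hμ)).exists_hasEigenvector
  have hpow := hv.pow_apply n
  rw [hA, one_apply] at hpow
  exact smul_left_injective K hv.2 (hpow.symm.trans (one_smul K v).symm)

theorem Module.End.norm_trace_eq_finrank_iff {V : Type*} [AddCommGroup V] [Module ℂ V]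
    [FiniteDimensional ℂ V] {A : Module.End ℂ V} {n : ℕ} (hn : n ≠ 0) (hA : A ^ n = 1) :
    ‖LinearMap.trace ℂ V A‖ = finrank ℂ V ↔ ∃ c : ℂ, A = c • 1 := by
  constructor
  · intro htr
    have hsplit : A.charpoly.Splits := IsAlgClosed.splits _
    have hcard : Multiset.card A.charpoly.roots = finrank ℂ V := by
      rw [← LinearMap.charpoly_natDegree A, splits_iff_card_roots.1 hsplit]
    have hunit : ∀ μ ∈ A.charpoly.roots, ‖μ‖ = 1 := fun μ hμ =>
      Complex.norm_eq_one_of_pow_eq_one (pow_eq_one_of_mem_roots_charpoly hA hμ) hn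
    rw [trace_eq_sum_roots_charpoly_of_splits hsplit, ← hcard] at htr
    obtain ⟨c, hc⟩ := Multiset.exists_eq_replicate_of_norm_sum_eq_card hunit htr
    have hcharpoly : A.charpoly = (X - C c) ^ finrank ℂ V := by
      rw [hsplit.eq_prod_roots_of_monic (LinearMap.charpoly_monic A), hc, Multiset.map_replicate,
        Multiset.prod_replicate, hcard]
    have hnil : IsNilpotent (A - algebraMap ℂ _ c) :=
      ⟨finrank ℂ V, by simpa [hcharpoly] using LinearMap.aeval_self_charpoly A⟩
    have hss : (A - algebraMap ℂ _ c).IsSemisimple := by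
      refine isSemisimple_sub_algebraMap_iff.2 (isSemisimple_of_squarefree_aeval_eq_zero
        (p := X ^ n - 1) ?_ (by simp [hA]))
      simpa using (separable_X_pow_sub_C (1 : ℂ) (by exact_mod_cast hn) one_ne_zero).squarefree
    exact ⟨c, by
      rw [← Algebra.algebraMap_eq_smul_one, ← sub_eq_zero]
      exact eq_zero_of_isNilpotent_isSemisimple hnil hss⟩
  · rintro ⟨c, rfl⟩
    rcases subsingleton_or_nontrivial V with hV | hV
    · simp [finrank_zero_of_subsingleton]
    have hc : c ^ n = 1 := by
      rw [← Algebra.algebraMap_eq_smul_one, ← map_pow, ← map_one (algebraMap ℂ (End ℂ V))]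
        at hA
      exact (algebraMap ℂ (End ℂ V)).injective hA
    simp [Complex.norm_eq_one_of_pow_eq_one hc hn]

namespace Representation

variable {k G V : Type*} [Field k] [Group G] [AddCommGroup V] [Module k V]

/-- The centre `Z(χ)` of the character of `ρ` (see `FDRep.norm_character_eq_finrank_iff`),
as the kernel of the conjugation action of `G` on `End k V`. -/
def scalarSubgroup (ρ : Representation k G V) : Subgroup G :=
  (linHom ρ ρ).ker

instance (ρ : Representation k G V) : ρ.scalarSubgroup.Normal :=
  MonoidHom.normal_ker _

theorem mem_scalarSubgroup_iff (ρ : Representation k G V) {g : G} :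
    g ∈ ρ.scalarSubgroup ↔ ∃ c : k, ρ g = c • 1 := by
  rw [scalarSubgroup, MonoidHom.mem_ker]
  constructor
  · intro h
    have hcentral : ρ g ∈ Set.center (End k V) := by
      refine Semigroup.mem_center_iff.2 fun f => ?_
      have := congr($(LinearMap.ext_iff.1 h f) * ρ g)
      simpa [← End.mul_eq_comp, mul_assoc, ← map_mul] using this.symm
    obtain ⟨c, _, hc⟩ := End.mem_center_iff.1 hcentral
    exact ⟨c, by ext v; simp [hc]⟩
  · rintro ⟨c, hc⟩
    ext f v
    calc ρ g (f (ρ g⁻¹ v)) = f (ρ g (ρ g⁻¹ v)) := by simp [hc]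
      _ = f v := by
        rw [← End.mul_apply (ρ g), ← map_mul, mul_inv_cancel, map_one, End.one_apply]

end Representation

namespace FDRep

variable {k G : Type*} [Field k]

theorem finrank_ne_zero [Monoid G] (W : FDRep k G) [Simple W] : finrank k W ≠ 0 := by
  intro h
  have := Module.finrank_zero_iff.1 h
  apply id_nonzero W
  ext v
  exact Subsingleton.elim _ _

theorem exists_eq_smul_one_of_commute [IsAlgClosed k] [Monoid G] (W : FDRep k G) [Simple W]
    (T : Module.End k W) (hT : ∀ g, Commute (W.ρ g) T) : ∃ c : k, T = c • 1 := by
  let f : W ⟶ W := ⟨FGModuleCat.ofHom T, fun g => by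
    ext v; exact (LinearMap.congr_fun (hT g) v).symm⟩
  obtain ⟨c, hc⟩ := endomorphism_simple_eq_smul_id k f
  exact ⟨c, congr($(hc).hom.hom.hom).symm⟩

theorem eq_bot_of_character_eq_zero [IsAlgClosed k] [CharZero k] [Group G] (W : FDRep k G)
    [Simple W] (N : Subgroup G) [N.Normal] [Finite N]
    (hN : ∀ y ∈ N, y ≠ 1 → W.character y = 0) : N = ⊥ := by
  have := Fintype.ofFinite N
  let S : Module.End k W := ∑ y : N, W.ρ y
  have hS_commute (g : G) : Commute (W.ρ g) S :=
    calc W.ρ g * S = ∑ y : N, W.ρ (MulAut.conjNormal g y * g) := by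
          simp [S, Finset.mul_sum, ← map_mul, mul_assoc]
      _ = ∑ y : N, W.ρ (y * g) := Equiv.sum_comp (MulAut.conjNormal g).toEquiv (W.ρ <| · * g)
      _ = S * W.ρ g := by simp [S, Finset.sum_mul, ← map_mul]
  have hS_absorb (y : N) : W.ρ y * S = S := by
    simpa [S, Finset.mul_sum, ← map_mul] using
      Equiv.sum_comp (Equiv.mulLeft y) (fun z : N => W.ρ z)
  have hS_sq : S * S = (Nat.card N : k) • S :=
    calc S * S = ∑ y : N, W.ρ y * S := Finset.sum_mul _ _ _
      _ = (Nat.card N : k) • S := by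
        rw [Finset.sum_congr rfl fun y _ => hS_absorb y, Finset.sum_const, Finset.card_univ,
          Nat.card_eq_fintype_card, Nat.cast_smul_eq_nsmul]
  have hS_trace : LinearMap.trace k W S = finrank k W := by
    rw [map_sum]
    change ∑ y : N, W.character y = _
    rw [Finset.sum_eq_single (1 : N) (fun y _ hy => hN y y.2 (by simpa using hy))
      (fun h => absurd (Finset.mem_univ _) h)]
    exact W.char_one
  have hd : (finrank k W : k) ≠ 0 := Nat.cast_ne_zero.2 W.finrank_ne_zero
  obtain ⟨c, hc⟩ := W.exists_eq_smul_one_of_commute S hS_commute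
  have hc1 : c = 1 := by
    rw [hc, map_smul, LinearMap.trace_one, smul_eq_mul] at hS_trace
    exact (mul_eq_right₀ hd).1 hS_trace
  rw [hc, hc1, one_smul, one_mul] at hS_sq
  have hcard : (Nat.card N : k) = 1 := by
    simpa [hd] using congr(LinearMap.trace k W $hS_sq)
  exact N.eq_bot_of_card_eq (by exact_mod_cast hcard)

theorem norm_character_eq_finrank_iff [Group G] [Finite G] (W : FDRep ℂ G) (g : G) :
    ‖W.character g‖ = finrank ℂ W ↔ g ∈ Representation.scalarSubgroup W.ρ := by
  rw [Representation.mem_scalarSubgroup_iff]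
  exact End.norm_trace_eq_finrank_iff (orderOf_pos g).ne'
    (by rw [← map_pow, pow_orderOf_eq_one, map_one])

end FDRep

theorem Subgroup.le_or_inf_eq_bot_of_minimal_normal {G : Type*} [Group G] {N : Subgroup G}
    (hN : Minimal (fun H : Subgroup G => H.Normal ∧ H ≠ ⊥) N) (D : Subgroup G) [D.Normal] :
    N ≤ D ∨ N ⊓ D = ⊥ := by
  have := hN.prop.1
  by_contra! h
  exact h.1 (inf_eq_left.1 (hN.eq_of_le ⟨inferInstance, h.2⟩ inf_le_left))

theorem inter_centres_nontrivial_general (G : Type) [Group G] [Fintype G] [Nontrivial G]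
    (ι : Type) (V : ι → FDRep ℂ G) [∀ i, Simple (V i)]
    (hAI : ∀ i, ∀ x : G, ‖(V i).character x‖ = 0 ∨
      ‖(V i).character x‖ = (Module.finrank ℂ (V i) : ℝ)) :
    ∃ x : G, x ≠ 1 ∧ ∀ i, ‖(V i).character x‖ = (Module.finrank ℂ (V i) : ℝ) := by
  obtain ⟨N, hN⟩ := (Set.toFinite {H : Subgroup G | H.Normal ∧ H ≠ ⊥}).exists_minimal
    ⟨⊤, inferInstance, top_ne_bot⟩
  have := hN.prop.1
  obtain ⟨a, haN, ha⟩ := (N.bot_or_exists_ne_one).resolve_left hN.prop.2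
  refine ⟨a, ha, fun i => ?_⟩
  rw [FDRep.norm_character_eq_finrank_iff]
  refine ((N.le_or_inf_eq_bot_of_minimal_normal hN _).resolve_right fun hbot => ?_) haN
  refine hN.prop.2 (FDRep.eq_bot_of_character_eq_zero (V i) N fun y hy hy1 => ?_)
  refine norm_eq_zero.1 ((hAI i y).resolve_right fun hy_centre => hy1 ?_)
  rw [FDRep.norm_character_eq_finrank_iff] at hy_centre
  simpa [hbot] using Subgroup.mem_inf.2 ⟨hy, hy_centre⟩

/-- If `G` is a finite group with `|G| ≥ 2` and `(V i)` is a finite family of irreducible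
complex representations whose characters are absolutely idempotent (`|χ(x)| ∈ {0, d_χ}`),
then the intersection of the centres `Z(χ_i) = {x | |χ_i(x)| = d_{χ_i}}` contains a
non-identity element. -/
theorem inter_centres_nontrivial (G : Type) [Group G] [Fintype G] [Nontrivial G]
    (ι : Type) [Finite ι] (V : ι → FDRep ℂ G) [∀ i, Simple (V i)]
    (hAI : ∀ i, ∀ x : G, ‖(V i).character x‖ = 0 ∨
      ‖(V i).character x‖ = (Module.finrank ℂ (V i) : ℝ)) :
    ∃ x : G, x ≠ 1 ∧ ∀ i, ‖(V i).character x‖ = (Module.finrank ℂ (V i) : ℝ) :=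
  inter_centres_nontrivial_general G ι V hAI
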